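/- arXiv:1610.05855 — 4 statements merged into one kernel-verified Lean document; each statement's English description precedes it below -/
import Mathlib

section
/- Let k > 0, ℓ ∈ ℝ, θ ∈ (−π/2, π/2), and let 𝕊¹₊ := {x̂ = (x̂₁, x̂₂) ∈ ℝ² : |x̂| = 1, x̂₂ > 0}. Let uˢ, uˢ_ℓ : ℝ² → ℂ and u^∞, u^∞_ℓ : 𝕊¹₊ → ℂ satisfy: (i) uˢ_ℓ(x + (ℓ, 0)) = e^{ikℓ sin θ} uˢ(x) for all x ∈ ℝ² with x₂ > 0; (ii) there exist constants C > 0 and R > 0 such that for all x ∈ ℝ² with x₂ > 0 and |x| ≥ R, |√|x| e^{−ik|x|} uˢ(x) − u^∞(x/|x|)| ≤ C/|x| and |√|x| e^{−ik|x|} uˢ_ℓ(x) − u^∞_ℓ(x/|x|)| ≤ C/|x|; (iii) u^∞ is continuous on 𝕊¹₊. Then u^∞_ℓ(x̂) = e^{ikℓ(sin θ − x̂₁)} u^∞(x̂) for all x̂ ∈ 𝕊¹₊. In particular |u^∞_ℓ(x̂)| = |u^∞(x̂)| for all x̂ ∈ 𝕊¹₊. -/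
open Complex

/-- The vector `(ℓ, 0) ∈ ℝ²`. -/
def shiftVec (ℓ : ℝ) : EuclideanSpace ℝ (Fin 2) := !₂[ℓ, 0]

/-- The open upper half of the unit circle in `ℝ²`. -/
def upperHalfCircle : Set (EuclideanSpace ℝ (Fin 2)) :=
  {x | ‖x‖ = 1 ∧ x 1 > 0}

/-!
Along the ray `t ↦ t x̂`, hypothesis (i) gives `uˢ_ℓ(t x̂) = e^{ikℓ sin θ} uˢ(t x̂ - v)` with
`v = (ℓ, 0)`. Since `|t x̂ - v| - t → -⟪x̂, v⟫`, `√t / √|t x̂ - v| → 1` and the direction of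
`t x̂ - v` tends to `x̂`, the normalised field `√|x| e^{-ik|x|} uˢ(x - v)` at `x = t x̂` tends to
`e^{-ik⟪x̂, v⟫} u^∞(x̂)`; continuity of `u^∞` absorbs the moving direction. Comparing with the
limit `u^∞_ℓ(x̂)` along the same ray gives the formula, as `⟪x̂, v⟫ = ℓ x̂₁`, and `|e^{iφ}| = 1`
gives the equality of moduli.
-/

open Filter Topology

section Ray

variable {E : Type*} [NormedAddCommGroup E] [NormedSpace ℝ E] {x : E} (v : E)

theorem abs_norm_smul_sub_sub_le (hx : ‖x‖ = 1) {t : ℝ} (ht : 0 ≤ t) :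
    |‖t • x - v‖ - t| ≤ ‖v‖ := by
  simpa [norm_smul, hx, abs_of_nonneg ht] using abs_norm_sub_norm_le (t • x - v) (t • x)

theorem norm_smul_sub_pos (hx : ‖x‖ = 1) {t : ℝ} (ht : ‖v‖ < t) : 0 < ‖t • x - v‖ := by
  have := abs_le.1 (abs_norm_smul_sub_sub_le v hx ((norm_nonneg v).trans ht.le))
  linarith

theorem tendsto_norm_smul_sub_atTop (hx : ‖x‖ = 1) :
    Tendsto (fun t : ℝ => ‖t • x - v‖) atTop atTop := by
  refine tendsto_atTop_mono' atTop ?_ (tendsto_atTop_add_const_right _ (-‖v‖) tendsto_id)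
  filter_upwards [eventually_ge_atTop 0] with t ht
  have := abs_le.1 (abs_norm_smul_sub_sub_le v hx ht)
  simp only [id]
  linarith

theorem tendsto_norm_smul_sub_div (hx : ‖x‖ = 1) :
    Tendsto (fun t : ℝ => ‖t • x - v‖ / t) atTop (𝓝 1) := by
  rw [tendsto_iff_norm_sub_tendsto_zero]
  refine squeeze_zero' (.of_forall fun _ => norm_nonneg _) ?_
    ((tendsto_const_nhds (x := ‖v‖)).div_atTop tendsto_id)
  filter_upwards [eventually_gt_atTop 0] with t ht
  rw [Real.norm_eq_abs, div_sub_one ht.ne', abs_div, abs_of_pos ht]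
  exact div_le_div_of_nonneg_right (abs_norm_smul_sub_sub_le v hx ht.le) ht.le

theorem tendsto_div_norm_smul_sub (hx : ‖x‖ = 1) :
    Tendsto (fun t : ℝ => t / ‖t • x - v‖) atTop (𝓝 1) := by
  simpa using (tendsto_norm_smul_sub_div v hx).inv₀ one_ne_zero

theorem tendsto_inv_norm_smul_smul_sub (hx : ‖x‖ = 1) :
    Tendsto (fun t : ℝ => ‖t • x - v‖⁻¹ • (t • x - v)) atTop (𝓝 x) := by
  have h := ((tendsto_div_norm_smul_sub v hx).smul_const x).sub
    ((tendsto_norm_smul_sub_atTop v hx).inv_tendsto_atTop.smul_const v)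
  rw [one_smul, zero_smul, sub_zero] at h
  refine h.congr fun t => ?_
  rw [smul_sub, smul_smul, div_eq_inv_mul, Pi.inv_apply]

end Ray

open scoped RealInnerProductSpace in
theorem tendsto_norm_smul_sub_sub_self {E : Type*} [NormedAddCommGroup E]
    [InnerProductSpace ℝ E] {x : E} (v : E) (hx : ‖x‖ = 1) :
    Tendsto (fun t : ℝ => ‖t • x - v‖ - t) atTop (𝓝 (-⟪x, v⟫)) := by
  have hlim : Tendsto (fun t : ℝ => (‖v‖ ^ 2 / t - 2 * ⟪x, v⟫) / (‖t • x - v‖ / t + 1)) atTop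
      (𝓝 ((0 - 2 * ⟪x, v⟫) / (1 + 1))) :=
    ((tendsto_const_nhds.div_atTop tendsto_id).sub tendsto_const_nhds).div
      ((tendsto_norm_smul_sub_div v hx).add tendsto_const_nhds) (by norm_num)
  rw [show (0 - 2 * ⟪x, v⟫) / (1 + 1) = -⟪x, v⟫ by ring] at hlim
  refine hlim.congr' ?_
  filter_upwards [eventually_gt_atTop ‖v‖] with t ht
  have ht0 : 0 < t := (norm_nonneg v).trans_lt ht
  have hn := norm_smul_sub_pos v hx ht
  -- `‖t • x - v‖ - t = (‖t • x - v‖² - t²) / (‖t • x - v‖ + t)`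
  have hsq : ‖t • x - v‖ ^ 2 = t ^ 2 - 2 * t * ⟪x, v⟫ + ‖v‖ ^ 2 := by
    rw [norm_sub_sq_real, norm_smul, real_inner_smul_left, hx, Real.norm_of_nonneg ht0.le]
    ring
  field_simp
  nlinarith [hsq]

section FarField

variable {E : Type*} [NormedAddCommGroup E]

/-- Its limit along the ray through `x̂` is the far-field pattern `u^∞(x̂)`. -/
noncomputable def rescaledField (k : ℝ) (u : E → ℂ) (x : E) : ℂ :=
  (Real.sqrt ‖x‖ : ℂ) * exp (-(I * k * ‖x‖)) * u x

theorem tendsto_rescaledField_of_farField_bound [NormedSpace ℝ E] {α : Type*} {l : Filter α}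
    {k C R : ℝ} {u uInf : E → ℂ} {S : Set E}
    (hbound : ∀ x ∈ S, R ≤ ‖x‖ → ‖rescaledField k u x - uInf (‖x‖⁻¹ • x)‖ ≤ C / ‖x‖)
    {y : α → E} (hy : Tendsto (fun a => ‖y a‖) l atTop) (hyS : ∀ᶠ a in l, y a ∈ S) {L : ℂ}
    (hdir : Tendsto (fun a => uInf (‖y a‖⁻¹ • y a)) l (𝓝 L)) :
    Tendsto (fun a => rescaledField k u (y a)) l (𝓝 L) := by
  have hrem : Tendsto (fun a => rescaledField k u (y a) - uInf (‖y a‖⁻¹ • y a)) l (𝓝 0) := by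
    rw [tendsto_zero_iff_norm_tendsto_zero]
    refine squeeze_zero' (.of_forall fun _ => norm_nonneg _) ?_
      ((tendsto_const_nhds (x := C)).div_atTop hy)
    filter_upwards [hyS, hy.eventually_ge_atTop R] with a haS haR
    exact hbound _ haS haR
  simpa using hrem.add hdir

theorem tendsto_rescaledField_ray_of_farField_bound [NormedSpace ℝ E] {k C R : ℝ}
    {u uInf : E → ℂ} {S D : Set E}
    (hbound : ∀ x ∈ S, R ≤ ‖x‖ → ‖rescaledField k u x - uInf (‖x‖⁻¹ • x)‖ ≤ C / ‖x‖)
    {x v : E} (hx : ‖x‖ = 1) (hS : ∀ᶠ t : ℝ in atTop, t • x - v ∈ S)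
    (hcont : ContinuousWithinAt uInf D x)
    (hD : ∀ᶠ t : ℝ in atTop, ‖t • x - v‖⁻¹ • (t • x - v) ∈ D) :
    Tendsto (fun t : ℝ => rescaledField k u (t • x - v)) atTop (𝓝 (uInf x)) :=
  tendsto_rescaledField_of_farField_bound hbound (tendsto_norm_smul_sub_atTop v hx) hS <|
    hcont.tendsto.comp <| tendsto_nhdsWithin_iff.2 ⟨tendsto_inv_norm_smul_smul_sub v hx, hD⟩

theorem tendsto_rescaledField_smul_of_farField_bound [NormedSpace ℝ E] {k C R : ℝ}
    {u uInf : E → ℂ} {S : Set E}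
    (hbound : ∀ x ∈ S, R ≤ ‖x‖ → ‖rescaledField k u x - uInf (‖x‖⁻¹ • x)‖ ≤ C / ‖x‖)
    {x : E} (hx : ‖x‖ = 1) (hS : ∀ᶠ t : ℝ in atTop, t • x ∈ S) :
    Tendsto (fun t : ℝ => rescaledField k u (t • x)) atTop (𝓝 (uInf x)) := by
  have hdir : ∀ᶠ t : ℝ in atTop, ‖t • x - 0‖⁻¹ • (t • x - 0) ∈ ({x} : Set E) := by
    filter_upwards [eventually_gt_atTop 0] with t ht
    simp [norm_smul, hx, abs_of_pos ht, smul_smul, ht.ne']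
  simpa using tendsto_rescaledField_ray_of_farField_bound hbound hx (by simpa using hS)
    continuousWithinAt_singleton hdir

open scoped RealInnerProductSpace in
theorem tendsto_rescaledField_comp_sub [InnerProductSpace ℝ E] {k : ℝ} {u : E → ℂ} {x v : E}
    (hx : ‖x‖ = 1) {L : ℂ}
    (h : Tendsto (fun t : ℝ => rescaledField k u (t • x - v)) atTop (𝓝 L)) :
    Tendsto (fun t : ℝ => rescaledField k (fun y => u (y - v)) (t • x)) atTop
      (𝓝 (exp (-(I * k * ⟪x, v⟫)) * L)) := by
  have hsqrt : Tendsto (fun t : ℝ => ((Real.sqrt (t / ‖t • x - v‖) : ℝ) : ℂ)) atTop (𝓝 1) := by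
    simpa only [Function.comp_def, Real.sqrt_one, ofReal_one] using
      (continuous_ofReal.comp Real.continuous_sqrt).tendsto 1 |>.comp
        (tendsto_div_norm_smul_sub v hx)
  have hphase : Tendsto (fun t : ℝ => exp (I * k * ((‖t • x - v‖ - t : ℝ) : ℂ))) atTop
      (𝓝 (exp (I * k * ((-⟪x, v⟫ : ℝ) : ℂ)))) :=
    (by fun_prop : Continuous fun r : ℝ => exp (I * k * r)).tendsto _ |>.comp
      (tendsto_norm_smul_sub_sub_self v hx)
  have hlim := (hsqrt.mul hphase).mul h
  rw [one_mul, ofReal_neg, mul_neg] at hlim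
  refine hlim.congr' ?_
  filter_upwards [eventually_gt_atTop ‖v‖] with t ht
  have ht0 : 0 ≤ t := (norm_nonneg v).trans ht.le
  have hn := norm_smul_sub_pos v hx ht
  have hsqrt_ne : (Real.sqrt ‖t • x - v‖ : ℂ) ≠ 0 := by exact_mod_cast (Real.sqrt_pos.2 hn).ne'
  simp only [rescaledField, norm_smul, hx, Real.norm_of_nonneg ht0, mul_one,
    Real.sqrt_div ht0, ofReal_div]
  rw [show exp (-(I * k * t)) = exp (I * k * ((‖t • x - v‖ - t : ℝ) : ℂ)) *
    exp (-(I * k * ‖t • x - v‖)) by rw [← exp_add]; push_cast; ring_nf]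
  field_simp

end FarField

theorem inv_norm_smul_mem_upperHalfCircle {x : EuclideanSpace ℝ (Fin 2)} (hx : 0 < x 1) :
    ‖x‖⁻¹ • x ∈ upperHalfCircle := by
  have hx0 : x ≠ 0 := by rintro rfl; simp at hx
  refine ⟨norm_smul_inv_norm hx0, ?_⟩
  simpa using mul_pos (inv_pos.2 (norm_pos_iff.2 hx0)) hx

open scoped RealInnerProductSpace in
theorem inner_shiftVec (x : EuclideanSpace ℝ (Fin 2)) (ℓ : ℝ) : ⟪x, shiftVec ℓ⟫ = x 0 * ℓ := by
  simp [shiftVec, PiLp.inner_apply, Fin.sum_univ_two, mul_comm]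

theorem farfield_translation_formula_general (k ℓ θ : ℝ)
    (us usl : EuclideanSpace ℝ (Fin 2) → ℂ)
    (uInf uInfl : EuclideanSpace ℝ (Fin 2) → ℂ)
    (htrans : ∀ x : EuclideanSpace ℝ (Fin 2), x 1 > 0 →
      usl (x + shiftVec ℓ) =
        Complex.exp (I * k * ℓ * Real.sin θ) * us x)
    (hfar : ∃ C > (0 : ℝ), ∃ R > (0 : ℝ), ∀ x : EuclideanSpace ℝ (Fin 2), x 1 > 0 → ‖x‖ ≥ R →
      ‖(Real.sqrt ‖x‖ : ℂ) * Complex.exp (-(I * k * ‖x‖)) * us x -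
          uInf (‖x‖⁻¹ • x)‖ ≤ C / ‖x‖ ∧
      ‖(Real.sqrt ‖x‖ : ℂ) * Complex.exp (-(I * k * ‖x‖)) * usl x -
          uInfl (‖x‖⁻¹ • x)‖ ≤ C / ‖x‖)
    (hcont : ContinuousOn uInf upperHalfCircle) :
    ∀ xhat ∈ upperHalfCircle,
      uInfl xhat = Complex.exp (I * k * ℓ * (Real.sin θ - xhat 0)) * uInf xhat ∧
      ‖uInfl xhat‖ = ‖uInf xhat‖ := by
  obtain ⟨C, -, R, -, hfar⟩ := hfar
  intro xhat hxhat
  have hunit : ‖xhat‖ = 1 := hxhat.1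
  have hupper : ∀ᶠ t : ℝ in atTop, 0 < (t • xhat - shiftVec ℓ) 1 := by
    filter_upwards [eventually_gt_atTop 0] with t ht
    simpa [shiftVec] using mul_pos ht hxhat.2
  have hus : Tendsto (fun t : ℝ => rescaledField k us (t • xhat - shiftVec ℓ)) atTop
      (𝓝 (uInf xhat)) :=
    tendsto_rescaledField_ray_of_farField_bound (fun x hx hR => (hfar x hx hR).1) hunit hupper
      (hcont xhat hxhat) (hupper.mono fun _ => inv_norm_smul_mem_upperHalfCircle)
  have husl : Tendsto (fun t : ℝ => rescaledField k usl (t • xhat)) atTop (𝓝 (uInfl xhat)) :=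
    tendsto_rescaledField_smul_of_farField_bound (S := {x : EuclideanSpace ℝ (Fin 2) | x 1 > 0})
      (fun x hx hR => (hfar x hx hR).2) hunit
      ((eventually_gt_atTop 0).mono fun _ ht => mul_pos ht hxhat.2)
  have hshift : (fun t : ℝ => rescaledField k usl (t • xhat)) =ᶠ[atTop] fun t =>
      exp (I * k * ℓ * Real.sin θ) * rescaledField k (fun y => us (y - shiftVec ℓ)) (t • xhat) := by
    filter_upwards [hupper] with t ht
    have htrans_t := htrans _ ht
    rw [sub_add_cancel] at htrans_t
    simp only [rescaledField, htrans_t]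
    ring
  have hlim := ((tendsto_rescaledField_comp_sub hunit hus).const_mul _).congr' hshift.symm
  have key : uInfl xhat = exp (I * k * ℓ * (Real.sin θ - xhat 0)) * uInf xhat := by
    rw [tendsto_nhds_unique husl hlim, inner_shiftVec, ← mul_assoc, ← exp_add]
    push_cast
    ring_nf
  refine ⟨key, ?_⟩
  rw [key, norm_mul, mul_assoc, mul_assoc, ← ofReal_sub, ← ofReal_mul, ← ofReal_mul,
    norm_exp_I_mul_ofReal, one_mul]

/-- Translation formula for far-field patterns: if `uˢ_ℓ(x + (ℓ,0)) = e^{ikℓ sin θ} uˢ(x)`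
on the upper half plane, and `u^∞`, `u^∞_ℓ` are the far-field patterns of `uˢ`, `uˢ_ℓ`
(with uniform `O(1/|x|)` remainder), and `u^∞` is continuous on the open upper half circle,
then `u^∞_ℓ(x̂) = e^{ikℓ(sin θ - x̂₁)} u^∞(x̂)` and in particular
`|u^∞_ℓ(x̂)| = |u^∞(x̂)|` for all `x̂` in the open upper half circle. -/
theorem farfield_translation_formula (k ℓ θ : ℝ) (hk : 0 < k)
    (hθ : θ ∈ Set.Ioo (-(Real.pi / 2)) (Real.pi / 2))
    (us usl : EuclideanSpace ℝ (Fin 2) → ℂ)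
    (uInf uInfl : EuclideanSpace ℝ (Fin 2) → ℂ)
    (htrans : ∀ x : EuclideanSpace ℝ (Fin 2), x 1 > 0 →
      usl (x + shiftVec ℓ) =
        Complex.exp (I * k * ℓ * Real.sin θ) * us x)
    (hfar : ∃ C > (0 : ℝ), ∃ R > (0 : ℝ), ∀ x : EuclideanSpace ℝ (Fin 2), x 1 > 0 → ‖x‖ ≥ R →
      ‖(Real.sqrt ‖x‖ : ℂ) * Complex.exp (-(I * k * ‖x‖)) * us x -
          uInf (‖x‖⁻¹ • x)‖ ≤ C / ‖x‖ ∧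
      ‖(Real.sqrt ‖x‖ : ℂ) * Complex.exp (-(I * k * ‖x‖)) * usl x -
          uInfl (‖x‖⁻¹ • x)‖ ≤ C / ‖x‖)
    (hcont : ContinuousOn uInf upperHalfCircle) :
    ∀ xhat ∈ upperHalfCircle,
      uInfl xhat = Complex.exp (I * k * ℓ * (Real.sin θ - xhat 0)) * uInf xhat ∧
      ‖uInfl xhat‖ = ‖uInf xhat‖ :=
  farfield_translation_formula_general k ℓ θ us usl uInf uInfl htrans hfar hcont
end

section
/- Let k > 0, let θ₁, θ₂ ∈ (−π/2, π/2) with θ₁ ≠ θ₂, let n ∈ ℤ, and set ℓ = 2πn / (k (sin θ₁ − sin θ₂)). Then for all complex numbers v₁, v₂ and every t ∈ ℝ, one has | e^{ikℓ(sin θ₁ − t)} v₁ + e^{ikℓ(sin θ₂ − t)} v₂ | = | v₁ + v₂ |. -/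
open Complex

/-! Both exponents are purely imaginary and differ by `i k ℓ (sin θ₁ - sin θ₂)`, which for the
distinguished shifts is `2πin`. So the two plane-wave factors coincide and have modulus one. -/

/-- With Lean's convention `x / 0 = 0` the identity also holds when `k * s = 0`, since then the
exponent vanishes. -/
theorem Complex.exp_I_mul_mul_mul_eq_one_of_eq_div (k s ℓ : ℝ) (n : ℤ)
    (hℓ : ℓ = 2 * Real.pi * n / (k * s)) : exp (I * ↑(k * ℓ * s)) = 1 := by
  rcases eq_or_ne (k * s) 0 with hks | hks
  · have h_zero : k * ℓ * s = 0 := by rw [mul_right_comm, hks, zero_mul]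
    simp [h_zero]
  · have h_period : k * ℓ * s = n * (2 * Real.pi) := by
      rw [mul_right_comm, mul_comm, hℓ, div_mul_cancel₀ _ hks, mul_comm]
    rw [h_period, mul_comm I]
    push_cast
    rw [mul_assoc, exp_int_mul_two_pi_mul_I]

theorem Complex.norm_exp_I_mul_mul_add_exp_I_mul_mul (a b : ℝ) (hab : exp (I * ↑(a - b)) = 1)
    (v₁ v₂ : ℂ) : ‖exp (I * a) * v₁ + exp (I * b) * v₂‖ = ‖v₁ + v₂‖ := by
  have h_eq : exp (I * a) = exp (I * b) := by
    rw [← mul_one (exp (I * b)), ← hab, ← exp_add]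
    congr 1
    push_cast
    ring
  rw [h_eq, ← mul_add, norm_mul, mul_comm I, norm_exp_ofReal_mul_I, one_mul]

theorem phaseless_invariance_for_distinguished_shifts_general (k θ₁ θ₂ : ℝ) (n : ℤ) (ℓ : ℝ)
    (hℓ : ℓ = 2 * Real.pi * n / (k * (Real.sin θ₁ - Real.sin θ₂))) :
    ∀ (v₁ v₂ : ℂ) (t : ℝ),
      ‖Complex.exp (I * k * ℓ * (Real.sin θ₁ - t)) * v₁ +
          Complex.exp (I * k * ℓ * (Real.sin θ₂ - t)) * v₂‖ =
        ‖v₁ + v₂‖ := by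
  intro v₁ v₂ t
  have h_phase : exp (I * ↑(k * ℓ * (Real.sin θ₁ - t) - k * ℓ * (Real.sin θ₂ - t))) = 1 := by
    rw [show k * ℓ * (Real.sin θ₁ - t) - k * ℓ * (Real.sin θ₂ - t) =
      k * ℓ * (Real.sin θ₁ - Real.sin θ₂) by ring]
    exact exp_I_mul_mul_mul_eq_one_of_eq_div k _ ℓ n hℓ
  convert norm_exp_I_mul_mul_add_exp_I_mul_mul _ _ h_phase v₁ v₂ using 5 <;> push_cast <;> ring

/-- For the distinguished shifts `ℓ = 2πn/(k(sin θ₁ - sin θ₂))`, the modulus of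
`e^{ikℓ(sin θ₁ - t)} v₁ + e^{ikℓ(sin θ₂ - t)} v₂` equals `|v₁ + v₂|` for all `v₁, v₂ ∈ ℂ`
and all `t ∈ ℝ` (sufficiency part of the translation-invariance theorem). -/
theorem phaseless_invariance_for_distinguished_shifts (k θ₁ θ₂ : ℝ) (hk : 0 < k)
    (hθ₁ : θ₁ ∈ Set.Ioo (-(Real.pi / 2)) (Real.pi / 2))
    (hθ₂ : θ₂ ∈ Set.Ioo (-(Real.pi / 2)) (Real.pi / 2))
    (hne : θ₁ ≠ θ₂) (n : ℤ) (ℓ : ℝ)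
    (hℓ : ℓ = 2 * Real.pi * n / (k * (Real.sin θ₁ - Real.sin θ₂))) :
    ∀ (v₁ v₂ : ℂ) (t : ℝ),
      ‖Complex.exp (I * k * ℓ * (Real.sin θ₁ - t)) * v₁ +
          Complex.exp (I * k * ℓ * (Real.sin θ₂ - t)) * v₂‖ =
        ‖v₁ + v₂‖ :=
  phaseless_invariance_for_distinguished_shifts_general k θ₁ θ₂ n ℓ hℓ
end

section
/- Let k > 0, let θ₁, θ₂ ∈ (−π/2, π/2) with θ₁ ≠ θ₂, and set Δ = sin θ₁ − sin θ₂. Let 𝕊¹₊ := {x̂ = (x̂₁, x̂₂) ∈ ℝ² : |x̂| = 1, x̂₂ > 0} and let v₁, v₂ : 𝕊¹₊ → ℂ be functions such that v₁(x̂₀) · conj(v₂(x̂₀)) ≠ 0 for some x̂₀ ∈ 𝕊¹₊. Then there exists τ ∈ [0, 2π) such that every ℓ ∈ ℝ satisfying | e^{ikℓ(sin θ₁ − x̂₁)} v₁(x̂) + e^{ikℓ(sin θ₂ − x̂₁)} v₂(x̂) | = | v₁(x̂) + v₂(x̂) | for all x̂ ∈ 𝕊¹₊ must be of the form ℓ =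 2πn/(kΔ) or ℓ = (2πn + τ)/(kΔ) for some n ∈ ℤ. -/
open Complex

/-!
Expanding `‖a v + b w‖² = ‖v + w‖²` for unimodular `a, b` leaves
`Re (a b̄ · v w̄) = Re (v w̄)`. At `x̂₀` the phase `a b̄` equals `e^{ikℓΔ}`, since the
`x̂₁`-dependence cancels, so with `c = v₁(x̂₀) conj(v₂(x̂₀)) ≠ 0` this reads
`cos (kℓΔ + arg c) = cos (arg c)`. Hence `kℓΔ ≡ 0` or `kℓΔ ≡ -2 arg c` modulo `2π`, and `τ` is
the representative of `-2 arg c` in `[0, 2π)`.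
-/

open ComplexConjugate

theorem re_mul_conj_eq_of_norm_add_eq {a b v w : ℂ} (ha : ‖a‖ = 1) (hb : ‖b‖ = 1)
    (h : ‖a * v + b * w‖ = ‖v + w‖) :
    (a * conj b * (v * conj w)).re = (v * conj w).re := by
  have h2 : normSq (a * v + b * w) = normSq (v + w) := by
    rw [← Complex.sq_norm, ← Complex.sq_norm, h]
  rw [normSq_add, normSq_add, normSq_mul, normSq_mul, ← Complex.sq_norm a,
    ← Complex.sq_norm b, ha, hb] at h2
  calc (a * conj b * (v * conj w)).re = (a * v * conj (b * w)).re := by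
        rw [map_mul]; ring_nf
    _ = (v * conj w).re := by linarith

theorem re_exp_mul_I_mul_eq_re_iff {c : ℂ} (hc : c ≠ 0) {t : ℝ} :
    (exp (t * I) * c).re = c.re ↔ Real.cos (t + arg c) = Real.cos (arg c) := by
  have hnorm : (0 : ℝ) < ‖c‖ := norm_pos_iff.mpr hc
  have hpolar : exp (t * I) * c = ‖c‖ * exp (↑(t + arg c) * I) := by
    conv_lhs => rw [← norm_mul_exp_arg_mul_I c]
    rw [ofReal_add, add_mul, exp_add]; ring
  rw [hpolar, re_ofReal_mul, exp_ofReal_mul_I_re, cos_arg hc, eq_div_iff hnorm.ne',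
    mul_comm (Real.cos _)]

theorem eq_two_pi_mul_or_eq_two_pi_mul_add_of_re_exp_mul_I_mul_eq {c : ℂ} (hc : c ≠ 0) {t : ℝ}
    (h : (exp (t * I) * c).re = c.re) :
    (∃ n : ℤ, t = 2 * Real.pi * n) ∨
      ∃ n : ℤ, t = 2 * Real.pi * n + toIcoMod Real.two_pi_pos 0 (-2 * arg c) := by
  obtain ⟨n, hn | hn⟩ := Real.cos_eq_cos_iff.mp ((re_exp_mul_I_mul_eq_re_iff hc).mp h)
  · exact Or.inl ⟨-n, by push_cast; linarith⟩
  · have hmod := self_sub_toIcoDiv_zsmul Real.two_pi_pos 0 (-2 * arg c)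
    rw [zsmul_eq_mul] at hmod
    exact Or.inr ⟨n + toIcoDiv Real.two_pi_pos 0 (-2 * arg c), by push_cast; linarith⟩

theorem norm_exp_I_mul_mul_sub (k ℓ s x : ℝ) : ‖exp (I * k * ℓ * (s - x))‖ = 1 := by
  rw [show I * k * ℓ * (s - x) = ((k * ℓ * (s - x) : ℝ) : ℂ) * I by push_cast; ring]
  exact norm_exp_ofReal_mul_I _

theorem exp_I_mul_mul_sub_mul_conj (k ℓ s₁ s₂ x : ℝ) :
    exp (I * k * ℓ * (s₁ - x)) * conj (exp (I * k * ℓ * (s₂ - x))) =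
      exp (↑(k * ℓ * (s₁ - s₂)) * I) := by
  rw [← exp_conj, ← exp_add]
  simp only [map_mul, conj_I, conj_ofReal, map_sub]
  push_cast
  ring_nf

theorem sin_ne_sin_of_mem_Ioo {θ₁ θ₂ : ℝ} (hθ₁ : θ₁ ∈ Set.Ioo (-(Real.pi / 2)) (Real.pi / 2))
    (hθ₂ : θ₂ ∈ Set.Ioo (-(Real.pi / 2)) (Real.pi / 2)) (hne : θ₁ ≠ θ₂) :
    Real.sin θ₁ ≠ Real.sin θ₂ :=
  fun h => hne (Real.injOn_sin (Set.Ioo_subset_Icc_self hθ₁) (Set.Ioo_subset_Icc_self hθ₂) h)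

/-- Structure of the shifts leaving the phaseless far-field pattern of a superposition of
two plane waves invariant: if `v₁(x̂₀) conj(v₂(x̂₀)) ≠ 0` for some `x̂₀` on the open upper
half circle, then there is `τ ∈ [0, 2π)` such that every shift `ℓ` satisfying
`|e^{ikℓ(sin θ₁ - x̂₁)} v₁(x̂) + e^{ikℓ(sin θ₂ - x̂₁)} v₂(x̂)| = |v₁(x̂) + v₂(x̂)|` for all
`x̂` on the upper half circle is of the form `ℓ = 2πn/(kΔ)` or `ℓ = (2πn + τ)/(kΔ)` with
`n ∈ ℤ`, where `Δ = sin θ₁ - sin θ₂`. -/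
theorem phaseless_invariance_shift_structure (k θ₁ θ₂ : ℝ) (hk : 0 < k)
    (hθ₁ : θ₁ ∈ Set.Ioo (-(Real.pi / 2)) (Real.pi / 2))
    (hθ₂ : θ₂ ∈ Set.Ioo (-(Real.pi / 2)) (Real.pi / 2))
    (hne : θ₁ ≠ θ₂) (Δ : ℝ) (hΔ : Δ = Real.sin θ₁ - Real.sin θ₂)
    (v₁ v₂ : EuclideanSpace ℝ (Fin 2) → ℂ)
    (hv : ∃ xhat₀ ∈ upperHalfCircle, v₁ xhat₀ * (starRingEnd ℂ) (v₂ xhat₀) ≠ 0) :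
    ∃ τ ∈ Set.Ico (0 : ℝ) (2 * Real.pi),
      ∀ ℓ : ℝ,
        (∀ xhat ∈ upperHalfCircle,
          ‖Complex.exp (I * k * ℓ * (Real.sin θ₁ - xhat 0)) * v₁ xhat +
              Complex.exp (I * k * ℓ * (Real.sin θ₂ - xhat 0)) * v₂ xhat‖ =
            ‖v₁ xhat + v₂ xhat‖) →
        (∃ n : ℤ, ℓ = 2 * Real.pi * n / (k * Δ)) ∨
        (∃ n : ℤ, ℓ = (2 * Real.pi * n + τ) / (k * Δ)) := by
  obtain ⟨x₀, hx₀, hc⟩ := hv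
  have hkΔ : k * Δ ≠ 0 :=
    mul_ne_zero hk.ne' (hΔ ▸ sub_ne_zero.mpr (sin_ne_sin_of_mem_Ioo hθ₁ hθ₂ hne))
  refine ⟨_, toIcoMod_mem_Ico' Real.two_pi_pos (-2 * arg (v₁ x₀ * conj (v₂ x₀))), fun ℓ h => ?_⟩
  have hre := re_mul_conj_eq_of_norm_add_eq (norm_exp_I_mul_mul_sub _ _ _ _)
    (norm_exp_I_mul_mul_sub _ _ _ _) (h x₀ hx₀)
  rw [exp_I_mul_mul_sub_mul_conj, ← hΔ, show k * ℓ * Δ = ℓ * (k * Δ) by ring] at hre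
  simp only [eq_div_iff hkΔ]
  exact eq_two_pi_mul_or_eq_two_pi_mul_add_of_re_exp_mul_I_mul_eq hc hre
end

section
/- Let h : ℝ → ℝ be continuous with compact support, let k > 0 and θ ∈ (−π/2, π/2), and set d = (sin θ, −cos θ), d' = (sin θ, cos θ). If exp( i k d · (x₁, h(x₁)) ) = exp( i k d' · (x₁, h(x₁)) ) for all x₁ ∈ ℝ, then h ≡ 0. -/
/-!
The incident and reflected phases at `(x₁, h x₁)` differ by `2 k cos θ h(x₁)`, so equality of the
two waves forces `k cos θ h(x₁) ∈ πℤ`. A continuous function on the connected line with values in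
the discrete set `πℤ` is constant, and a compactly supported function on the noncompact line
vanishes somewhere; hence `k cos θ h ≡ 0`, and `k cos θ > 0` for `θ ∈ (-π/2, π/2)`.
-/

open Complex
open scoped RealInnerProductSpace

lemma EuclideanSpace.inner_toLp_fin_two (u : EuclideanSpace ℝ (Fin 2)) (x y : ℝ) :
    ⟪u, (WithLp.toLp 2 ![x, y] : EuclideanSpace ℝ (Fin 2))⟫ = u 0 * x + u 1 * y := by
  simp [PiLp.inner_apply, Fin.sum_univ_two, mul_comm]

lemma Complex.exp_I_mul_eq_exp_I_mul_iff {x y : ℝ} :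
    exp (I * x) = exp (I * y) ↔ ∃ m : ℤ, x = y + m * (2 * Real.pi) := by
  rw [← Circle.exp_eq_exp, Circle.ext_iff, Circle.coe_exp, Circle.coe_exp, mul_comm I, mul_comm I]

lemma mem_zmultiples_pi_of_exp_I_mul_sub_eq {a b : ℝ}
    (h : exp (I * ↑(a - b)) = exp (I * ↑(a + b))) : b ∈ AddSubgroup.zmultiples Real.pi := by
  obtain ⟨m, hm⟩ := Complex.exp_I_mul_eq_exp_I_mul_iff.1 h
  exact AddSubgroup.mem_zmultiples_iff.2 ⟨-m, by rw [zsmul_eq_mul]; push_cast; linarith⟩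

lemma HasCompactSupport.exists_eq_zero {X α : Type*} [TopologicalSpace X] [NoncompactSpace X]
    [Zero α] {f : X → α} (hf : HasCompactSupport f) : ∃ x, f x = 0 := by
  by_contra! hne
  have htsupport : tsupport f = Set.univ :=
    Set.eq_univ_of_univ_subset fun x _ => subset_tsupport f (hne x)
  exact noncompact_univ X (htsupport ▸ hf.isCompact)

lemma Continuous.eq_zero_of_hasCompactSupport_of_mem_zmultiples {X : Type*} [TopologicalSpace X]
    [PreconnectedSpace X] [NoncompactSpace X] {f : X → ℝ} (hf : Continuous f)
    (hsupp : HasCompactSupport f) {c : ℝ} (hc : ∀ x, f x ∈ AddSubgroup.zmultiples c) (x : X) :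
    f x = 0 := by
  obtain ⟨x₀, hx₀⟩ := hsupp.exists_eq_zero
  rw [← hx₀]
  have hdiscrete : IsDiscrete (AddSubgroup.zmultiples c : Set ℝ) :=
    isDiscrete_iff_discreteTopology.2
      (inferInstanceAs (DiscreteTopology (AddSubgroup.zmultiples c)))
  exact isPreconnected_univ.constant_of_mapsTo hdiscrete hf.continuousOn (fun x _ => hc x)
    (Set.mem_univ x) (Set.mem_univ x₀)

/-- If `h` is continuous with compact support and the incident plane wave coincides with the
reflected wave on the whole surface `Γ = {(x₁, h(x₁))}`, i.e.
`e^{ik d·(x₁, h(x₁))} = e^{ik d'·(x₁, h(x₁))}` for all `x₁`, where `d = (sin θ, -cos θ)` and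
`d' = (sin θ, cos θ)`, then `h ≡ 0`. -/
theorem flat_surface_of_incident_eq_reflected (h : ℝ → ℝ) (hcont : Continuous h)
    (hsupp : HasCompactSupport h) (k θ : ℝ) (hk : 0 < k)
    (hθ : θ ∈ Set.Ioo (-(Real.pi / 2)) (Real.pi / 2))
    (d d' : EuclideanSpace ℝ (Fin 2))
    (hd : d = ![Real.sin θ, -Real.cos θ]) (hd' : d' = ![Real.sin θ, Real.cos θ])
    (heq : ∀ x₁ : ℝ,
      Complex.exp (I * k * (⟪d, (WithLp.toLp 2 ![x₁, h x₁] : EuclideanSpace ℝ (Fin 2))⟫ : ℝ)) =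
        Complex.exp (I * k * (⟪d', (WithLp.toLp 2 ![x₁, h x₁] : EuclideanSpace ℝ (Fin 2))⟫ : ℝ))) :
    ∀ x₁ : ℝ, h x₁ = 0 := by
  have hkc : k * Real.cos θ ≠ 0 := (mul_pos hk (Real.cos_pos_of_mem_Ioo hθ)).ne'
  have hphase : ∀ x₁, k * Real.cos θ * h x₁ ∈ AddSubgroup.zmultiples Real.pi := fun x₁ => by
    apply mem_zmultiples_pi_of_exp_I_mul_sub_eq (a := k * Real.sin θ * x₁)
    have hx₁ := heq x₁
    simp only [EuclideanSpace.inner_toLp_fin_two, hd, hd', Matrix.cons_val_zero,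
      Matrix.cons_val_one] at hx₁
    convert hx₁ using 2 <;> push_cast <;> ring
  intro x₁
  have hzero := (continuous_const.mul hcont).eq_zero_of_hasCompactSupport_of_mem_zmultiples
    hsupp.mul_left hphase x₁
  exact (mul_eq_zero.1 hzero).resolve_left hkc
end
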